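/- Let $a < b$ be real numbers, $n > 0$, let $g : [a,b] \to \mathbb{R}$ be continuous, and set $f := J_a^n g$. Then with $m := \lceil n \rceil$, the fractional derivative $D_a^n f = \frac{d^m}{dx^m} J_a^{m-n} f$ exists classically everywhere on $[a,b]$, and $J_a^n (D_a^n f)(x) = f(x)$ for every $x \in [a,b]$. (This is the paper's Corollary that $\mathcal{J}_a^n \mathcal{D}_a^n f = f$ whenever $f$ lies in the range of $\mathcal{J}_a^n$, stated for continuous $g$.) -/

import Mathlib

/-!
The Riemann–Liouville integrals form a semigroup, `J^p (J^q G) = J^(p+q) G` for continuous `G`: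
exchanging the order of integration over the triangle `a ≤ t ≤ s ≤ x` leaves the inner integral
`∫_t^x (x - s)^(p-1) (s - t)^(q-1) ds = B(p, q) (x - t)^(p+q-1)`. Hence, with `m = ⌈n⌉`,
`J^(m-n) f = J^(m-n) J^n g = J^m g`, and since `J^(j+1) G = ∫_a^x J^j G`, the fundamental theorem
of calculus gives `d^k/dx^k J^m g = J^(m-k) g`. In particular `D^n f = g` on `[a, b]`, so
`J^n (D^n f) = J^n g = f`.
-/

open MeasureTheory Set

/-- The Riemann–Liouville fractional integral of order `n` based at `a`,
with `J_a^0` the identity operator. -/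
noncomputable def rlInt (a n : ℝ) (h : ℝ → ℝ) : ℝ → ℝ :=
  if n = 0 then h else fun x => (1 / Real.Gamma n) * ∫ t in a..x, (x - t) ^ (n - 1) * h t

open intervalIntegral ProbabilityTheory

theorem intervalIntegrable_sub_rpow {β : ℝ} (hβ : -1 < β) (a s : ℝ) :
    IntervalIntegrable (fun t => (s - t) ^ β) volume a s := by
  simpa using (intervalIntegrable_rpow' (a := s - a) (b := s - s) hβ).comp_sub_left s

theorem integral_sub_rpow {β : ℝ} (hβ : -1 < β) (a s : ℝ) :
    ∫ t in a..s, (s - t) ^ β = (s - a) ^ (β + 1) / (β + 1) := by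
  rw [integral_comp_sub_left (fun u => u ^ β) s, sub_self, integral_rpow (Or.inl hβ),
    Real.zero_rpow (by linarith), sub_zero]

theorem integral_sub_rpow_mul_sub_rpow {p q t x : ℝ} (hp : 0 < p) (hq : 0 < q) (htx : t < x) :
    ∫ s in t..x, (x - s) ^ (p - 1) * (s - t) ^ (q - 1) =
      beta p q * (x - t) ^ (p + q - 1) := by
  have hc : 0 < x - t := sub_pos.2 htx
  have hshift : ∫ s in t..x, (x - s) ^ (p - 1) * (s - t) ^ (q - 1) =
      ∫ v in (0 : ℝ)..x - t, (x - t - v) ^ (p - 1) * v ^ (q - 1) := by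
    simpa [sub_add_eq_sub_sub_swap] using
      (integral_comp_add_right (fun s => (x - s) ^ (p - 1) * (s - t) ^ (q - 1)) t
        (a := 0) (b := x - t)).symm
  have hcomplex : ((∫ v in (0 : ℝ)..x - t, (x - t - v) ^ (p - 1) * v ^ (q - 1) : ℝ) : ℂ) =
      ∫ v in (0 : ℝ)..x - t,
        (v : ℂ) ^ ((q : ℂ) - 1) * (((x - t : ℝ) : ℂ) - v) ^ ((p : ℂ) - 1) := by
    rw [← integral_ofReal]
    refine integral_congr fun v hv => ?_
    rw [uIcc_of_le hc.le] at hv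
    rw [Complex.ofReal_mul, Complex.ofReal_cpow (by linarith [hv.2]),
      Complex.ofReal_cpow hv.1, mul_comm]
    push_cast
    ring_nf
  have hbeta : Complex.betaIntegral q p = (beta p q : ℂ) := by
    rw [Complex.betaIntegral_eq_Gamma_mul_div _ _ (by simpa) (by simpa), beta,
      mul_comm, add_comm, ← Complex.ofReal_add]
    simp only [Complex.Gamma_ofReal]
    norm_cast
  rw [hshift]
  apply Complex.ofReal_injective
  rw [hcomplex, Complex.betaIntegral_scaled _ _ hc, hbeta, Complex.ofReal_mul,
    Complex.ofReal_cpow hc.le, add_comm (q : ℂ)]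
  push_cast
  ring

def triangle (a b : ℝ) : Set (ℝ × ℝ) := {z | a ≤ z.2 ∧ z.2 ≤ z.1 ∧ z.1 ≤ b}

section Triangle

variable {a b : ℝ}

theorem isCompact_triangle (a b : ℝ) : IsCompact (triangle a b) := by
  refine ((isCompact_Icc (a := a) (b := b)).prod (isCompact_Icc (a := a) (b := b)))
    |>.of_isClosed_subset ?_ ?_
  · exact (isClosed_le continuous_const continuous_snd).inter
      ((isClosed_le continuous_snd continuous_fst).inter
        (isClosed_le continuous_fst continuous_const))
  · rintro ⟨s, t⟩ ⟨hat, hts, hsb⟩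
    exact ⟨⟨hat.trans hts, hsb⟩, hat, hts.trans hsb⟩

theorem measurableSet_triangle (a b : ℝ) : MeasurableSet (triangle a b) :=
  (isCompact_triangle a b).isClosed.measurableSet

theorem indicator_triangle_apply_left {M : Type*} [Zero M] (f : ℝ × ℝ → M) (s t : ℝ) :
    (triangle a b).indicator f (s, t) =
      (Icc a b).indicator (fun s => (Icc a s).indicator (fun t => f (s, t)) t) s := by
  by_cases hs : s ∈ Icc a b
  · simp only [indicator_of_mem hs, indicator_apply, triangle, mem_ofPred_eq, mem_Icc, hs.2,
      and_true]
  · rw [indicator_of_notMem hs, indicator_of_notMem fun h => hs ⟨h.1.trans h.2.1, h.2.2⟩]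

theorem indicator_triangle_apply_right {M : Type*} [Zero M] (f : ℝ × ℝ → M) (s t : ℝ) :
    (triangle a b).indicator f (s, t) =
      (Icc a b).indicator (fun t => (Icc t b).indicator (fun s => f (s, t)) s) t := by
  by_cases ht : t ∈ Icc a b
  · simp only [indicator_of_mem ht, indicator_apply, triangle, mem_ofPred_eq, mem_Icc, ht.1,
      true_and]
  · rw [indicator_of_notMem ht, indicator_of_notMem fun h => ht ⟨h.1, h.2.1.trans h.2.2⟩]

variable {E : Type*} [NormedAddCommGroup E] [NormedSpace ℝ E]

theorem integral_indicator_triangle_left (f : ℝ × ℝ → E) (s : ℝ) :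
    ∫ t, (triangle a b).indicator f (s, t) =
      (Icc a b).indicator (fun s => ∫ t in a..s, f (s, t)) s := by
  simp_rw [indicator_triangle_apply_left]
  by_cases hs : s ∈ Icc a b
  · simp_rw [indicator_of_mem hs]
    rw [MeasureTheory.integral_indicator measurableSet_Icc, integral_Icc_eq_integral_Ioc,
      integral_of_le hs.1]
  · simp [indicator_of_notMem hs]

theorem integral_indicator_triangle_right (f : ℝ × ℝ → E) (t : ℝ) :
    ∫ s, (triangle a b).indicator f (s, t) =
      (Icc a b).indicator (fun t => ∫ s in t..b, f (s, t)) t := by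
  simp_rw [indicator_triangle_apply_right]
  by_cases ht : t ∈ Icc a b
  · simp_rw [indicator_of_mem ht]
    rw [MeasureTheory.integral_indicator measurableSet_Icc, integral_Icc_eq_integral_Ioc,
      integral_of_le ht.2]
  · simp [indicator_of_notMem ht]

theorem integral_integral_swap_triangle [CompleteSpace E] {f : ℝ × ℝ → E} (hab : a ≤ b)
    (hf : IntegrableOn f (triangle a b)) :
    ∫ s in a..b, ∫ t in a..s, f (s, t) = ∫ t in a..b, ∫ s in t..b, f (s, t) := by
  have hind : Integrable ((triangle a b).indicator f) (volume.prod volume) :=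
    (integrable_indicator_iff (measurableSet_triangle a b)).2 hf
  have h := (integral_prod _ hind).symm.trans (integral_prod_symm _ hind)
  simp_rw [integral_indicator_triangle_left, integral_indicator_triangle_right] at h
  rwa [MeasureTheory.integral_indicator measurableSet_Icc,
    MeasureTheory.integral_indicator measurableSet_Icc,
    integral_Icc_eq_integral_Ioc, integral_Icc_eq_integral_Ioc, ← integral_of_le hab,
    ← integral_of_le hab] at h

theorem integrableOn_triangle_rpow_mul_rpow {α β : ℝ} (hα : -1 < α) (hβ : -1 < β)
    (hab : a ≤ b) :
    IntegrableOn (fun z : ℝ × ℝ => (b - z.1) ^ α * (z.1 - z.2) ^ β) (triangle a b) := by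
  have hslice : ∀ s, IntervalIntegrable (fun t => (b - s) ^ α * (s - t) ^ β) volume a s :=
    fun s => (intervalIntegrable_sub_rpow hβ a s).const_mul _
  have hnorm : ∀ s ∈ Icc a b,
      ∫ t in a..s, ‖(b - s) ^ α * (s - t) ^ β‖ = (b - s) ^ α * ((s - a) ^ (β + 1) / (β + 1)) := by
    intro s hs
    rw [← integral_sub_rpow hβ, ← intervalIntegral.integral_const_mul]
    refine integral_congr fun t ht => ?_
    rw [uIcc_of_le hs.1] at ht
    exact Real.norm_of_nonneg (mul_nonneg (Real.rpow_nonneg (by linarith [hs.2]) _)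
      (Real.rpow_nonneg (by linarith [ht.2]) _))
  have hbound :
      IntegrableOn (fun s => (b - s) ^ α * ((s - a) ^ (β + 1) / (β + 1))) (Icc a b) := by
    rw [← intervalIntegrable_iff_integrableOn_Icc_of_le hab]
    refine (intervalIntegrable_sub_rpow hα a b).mul_continuousOn ?_
    exact ((continuous_id.sub continuous_const).rpow_const
      fun _ => Or.inr (by linarith)).div_const _ |>.continuousOn
  have hmeas : Measurable fun z : ℝ × ℝ => (b - z.1) ^ α * (z.1 - z.2) ^ β := by fun_prop
  rw [← integrable_indicator_iff (measurableSet_triangle a b), Measure.volume_eq_prod,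
    integrable_prod_iff (hmeas.indicator (measurableSet_triangle a b)).aestronglyMeasurable]
  refine ⟨Filter.Eventually.of_forall fun s => ?_, ?_⟩
  · rw [funext (indicator_triangle_apply_left _ s)]
    by_cases hs : s ∈ Icc a b
    · simp_rw [indicator_of_mem hs]
      exact (integrable_indicator_iff measurableSet_Icc).2
        ((intervalIntegrable_iff_integrableOn_Icc_of_le hs.1).1 (hslice s))
    · simp [indicator_of_notMem hs]
  · simp_rw [norm_indicator_eq_indicator_norm, integral_indicator_triangle_left]
    refine ((integrable_indicator_iff measurableSet_Icc).2 hbound).congr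
      (Filter.Eventually.of_forall fun s => ?_)
    by_cases hs : s ∈ Icc a b
    · simp only [indicator_of_mem hs, hnorm s hs]
    · simp only [indicator_of_notMem hs]

end Triangle

section RiemannLiouville

variable {a : ℝ} {G : ℝ → ℝ}

theorem rlInt_zero (a : ℝ) (h : ℝ → ℝ) : rlInt a 0 h = h := if_pos rfl

theorem rlInt_one (a : ℝ) (h : ℝ → ℝ) : rlInt a 1 h = fun x => ∫ t in a..x, h t := by
  simp [rlInt, Real.Gamma_one]

theorem rlInt_congr {h₁ h₂ : ℝ → ℝ} {r x : ℝ} (hax : a ≤ x) (h : EqOn h₁ h₂ (Icc a x)) :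
    rlInt a r h₁ x = rlInt a r h₂ x := by
  by_cases hr : r = 0
  · simpa [hr, rlInt_zero] using h ⟨hax, le_rfl⟩
  · simp only [rlInt, if_neg hr]
    congr 1
    refine integral_congr fun t ht => ?_
    rw [uIcc_of_le hax] at ht
    simp only [h ht]

theorem rlInt_rlInt {p q x : ℝ} (hp : 0 ≤ p) (hq : 0 ≤ q) (hax : a ≤ x)
    (hG : ContinuousOn G (Icc a x)) :
    rlInt a p (rlInt a q G) x = rlInt a (p + q) G x := by
  rcases hp.eq_or_lt with rfl | hp
  · simp [rlInt_zero]
  rcases hq.eq_or_lt with rfl | hq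
  · simp [rlInt_zero]
  have hF : IntegrableOn (fun z : ℝ × ℝ => (x - z.1) ^ (p - 1) * (z.1 - z.2) ^ (q - 1) * G z.2)
      (triangle a x) :=
    (integrableOn_triangle_rpow_mul_rpow (by linarith) (by linarith) hax).mul_continuousOn
      (hG.comp continuousOn_snd fun z hz => ⟨hz.1, hz.2.1.trans hz.2.2⟩) (isCompact_triangle a x)
  have hinner : EqOn (fun t => ∫ s in t..x, (x - s) ^ (p - 1) * (s - t) ^ (q - 1) * G t)
      (fun t => beta p q * ((x - t) ^ (p + q - 1) * G t)) (Ioo a x) := fun t ht => by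
    dsimp only
    rw [intervalIntegral.integral_mul_const, integral_sub_rpow_mul_sub_rpow hp hq ht.2, mul_assoc]
  simp only [rlInt, if_neg hp.ne', if_neg hq.ne', if_neg (add_pos hp hq).ne']
  calc 1 / Real.Gamma p * ∫ s in a..x, (x - s) ^ (p - 1) *
        (1 / Real.Gamma q * ∫ t in a..s, (s - t) ^ (q - 1) * G t)
      = 1 / (Real.Gamma p * Real.Gamma q) *
          ∫ s in a..x, ∫ t in a..s, (x - s) ^ (p - 1) * (s - t) ^ (q - 1) * G t := by
        have hpull : ∀ s, ∫ t in a..s, (x - s) ^ (p - 1) * (s - t) ^ (q - 1) * G t =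
            (x - s) ^ (p - 1) * ∫ t in a..s, (s - t) ^ (q - 1) * G t := fun s => by
          simp_rw [mul_assoc]
          exact intervalIntegral.integral_const_mul _ _
        simp_rw [hpull, mul_left_comm _ (1 / Real.Gamma q), intervalIntegral.integral_const_mul]
        ring
    _ = 1 / (Real.Gamma p * Real.Gamma q) *
          ∫ t in a..x, ∫ s in t..x, (x - s) ^ (p - 1) * (s - t) ^ (q - 1) * G t := by
        rw [integral_integral_swap_triangle hax hF]
    _ = 1 / Real.Gamma (p + q) * ∫ t in a..x, (x - t) ^ (p + q - 1) * G t := by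
        rw [integral_congr_Ioo_of_le hax hinner, intervalIntegral.integral_const_mul, beta]
        field_simp

theorem continuous_rlInt_natCast (hG : Continuous G) (a : ℝ) (j : ℕ) :
    Continuous (rlInt a j G) := by
  rcases j with _ | j
  · simpa [rlInt_zero] using hG
  · have hj : ((j + 1 : ℕ) : ℝ) ≠ 0 := by positivity
    simp only [rlInt, if_neg hj]
    refine continuous_const.mul (continuous_parametric_intervalIntegral_of_continuous
      (f := fun x t => (x - t) ^ (((j + 1 : ℕ) : ℝ) - 1) * G t) ?_ continuous_id)
    exact ((continuous_fst.sub continuous_snd).rpow_const fun _ => Or.inr (by simp)).mul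
      (hG.comp continuous_snd)

theorem rlInt_one_add_apply {r x : ℝ} (hr : 0 ≤ r) (hax : a ≤ x)
    (hG : ContinuousOn G (Icc a x)) : rlInt a (1 + r) G x = ∫ t in a..x, rlInt a r G t := by
  rw [← rlInt_rlInt zero_le_one hr hax hG, rlInt_one]

theorem hasDerivWithinAt_rlInt_natCast_add_one (hG : Continuous G) (j : ℕ) {x : ℝ}
    (hax : a ≤ x) : HasDerivWithinAt (rlInt a (j + 1) G) (rlInt a j G x) (Ici a) x := by
  have heq : ∀ z ∈ Ici a, rlInt a (j + 1) G z = ∫ t in a..z, rlInt a j G t := fun z hz => by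
    rw [add_comm, rlInt_one_add_apply (Nat.cast_nonneg j) hz hG.continuousOn]
  exact ((continuous_rlInt_natCast hG a j).integral_hasStrictDerivAt a x).hasDerivAt
    |>.hasDerivWithinAt.congr heq (heq x hax)

theorem iteratedDerivWithin_rlInt_natCast {b : ℝ} (hab : a < b) (hG : Continuous G) (j k : ℕ) :
    EqOn (iteratedDerivWithin k (rlInt a (j + k : ℕ) G) (Icc a b)) (rlInt a j G) (Icc a b) := by
  induction k generalizing j with
  | zero => intro x _; simp [iteratedDerivWithin_zero]
  | succ k ih =>
    have hderiv : EqOn (derivWithin (rlInt a (j + (k + 1) : ℕ) G) (Icc a b))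
        (rlInt a (j + k : ℕ) G) (Icc a b) := fun x hx => by
      rw [show ((j + (k + 1) : ℕ) : ℝ) = ((j + k : ℕ) : ℝ) + 1 by push_cast; ring]
      exact ((hasDerivWithinAt_rlInt_natCast_add_one hG (j + k) hx.1).mono
        Icc_subset_Ici_self).derivWithin (uniqueDiffOn_Icc hab x hx)
    rw [iteratedDerivWithin_succ']
    exact (iteratedDerivWithin_congr hderiv).trans (ih j)

end RiemannLiouville

theorem rl_integral_inverts_derivative_on_range (a b n : ℝ) (hab : a < b) (hn : 0 < n)
    (g : ℝ → ℝ) (hg : ContinuousOn g (Icc a b))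
    (f : ℝ → ℝ) (hf : f = rlInt a n g) :
    (∀ k < ⌈n⌉₊, ∀ x ∈ Icc a b,
      DifferentiableWithinAt ℝ
        (iteratedDerivWithin k (rlInt a ((⌈n⌉₊ : ℝ) - n) f) (Icc a b)) (Icc a b) x) ∧
    ∀ x ∈ Icc a b,
      rlInt a n (iteratedDerivWithin ⌈n⌉₊ (rlInt a ((⌈n⌉₊ : ℝ) - n) f) (Icc a b)) x =
        f x := by
  -- A continuous extension of `g` to all of `ℝ`, so that the FTC applies up to the endpoints.
  obtain ⟨G, hGc, hGg⟩ : ∃ G : ℝ → ℝ, Continuous G ∧ EqOn G g (Icc a b) :=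
    ⟨IccExtend hab.le ((Icc a b).domRestrict g), continuous_IccExtend_iff.2 hg.domRestrict,
      fun t ht => IccExtend_of_mem _ _ ht⟩
  have hfG : EqOn f (rlInt a n G) (Icc a b) := fun x hx => by
    rw [hf]
    exact rlInt_congr hx.1 (hGg.symm.mono (Icc_subset_Icc_right hx.2))
  have hJf : EqOn (rlInt a (⌈n⌉₊ - n) f) (rlInt a ⌈n⌉₊ G) (Icc a b) := fun x hx => by
    rw [rlInt_congr hx.1 (hfG.mono (Icc_subset_Icc_right hx.2)),
      rlInt_rlInt (sub_nonneg.2 (Nat.le_ceil n)) hn.le hx.1 hGc.continuousOn, sub_add_cancel]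
  have hD : ∀ j k, j + k = ⌈n⌉₊ →
      EqOn (iteratedDerivWithin k (rlInt a (⌈n⌉₊ - n) f) (Icc a b)) (rlInt a j G) (Icc a b) := by
    intro j k hjk
    rw [← hjk] at hJf ⊢
    exact (iteratedDerivWithin_congr hJf).trans (iteratedDerivWithin_rlInt_natCast hab hGc j k)
  refine ⟨fun k hk x hx => ?_, fun x hx => ?_⟩
  · obtain ⟨j, hj⟩ : ∃ j, j + 1 + k = ⌈n⌉₊ := ⟨⌈n⌉₊ - k - 1, by omega⟩
    have hDj := hD (j + 1) k hj
    rw [Nat.cast_succ] at hDj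
    exact ((hasDerivWithinAt_rlInt_natCast_add_one hGc j hx.1).mono
      Icc_subset_Ici_self).differentiableWithinAt.congr (fun y hy => hDj hy) (hDj hx)
  · have hDg : EqOn (iteratedDerivWithin ⌈n⌉₊ (rlInt a (⌈n⌉₊ - n) f) (Icc a b)) g (Icc a b) :=
      fun y hy => by rw [hD 0 _ (zero_add _) hy, Nat.cast_zero, rlInt_zero, hGg hy]
    rw [rlInt_congr hx.1 (hDg.mono (Icc_subset_Icc_right hx.2)), hf]
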